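/- Let n ≥ q ≥ 1 and 0 ≤ s ≤ n − q, and let w = w(n,q,s) be the wrinkle model. For every open neighborhood U ⊂ ℝⁿ of the disk D^q × {0} = {(y,z,0) : |y|² + z² ≤ 1}, there exists a smooth function γ : ℝⁿ → ℝ such that: (i) γ(y,z,x) = 3(z² + |y|² − 1) for all (y,z,x) ∈ ℝⁿ \ U; (ii) γ(y,z,0) > 0 for all (y,z) ∈ ℝ^q with (y,z,0) ∈ U; and (iii) for every point p = (y,z,x) ∈ ℝⁿ, the linear map R_p : ℝⁿ → ℝ^q obtained from the Jacobi matrix of w at p by replacing the entry ∂w_q/∂z = 3(z² + |y|² − 1) with γ(p) is surjective. The bundle map p ↦ R_p coincides with dw outside U and is an epimorphism on all of ℝⁿ (the regularized differential R(dw)). -/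

import Mathlib

/-!
Let `f` be a smooth Urysohn function equal to `1` on the disk and `0` off `U`, and put
`γ = 3(z² + |y|² − 1) + 4f`. On the disk `3(z² + |y|² − 1) ≥ −3`, and elsewhere in
`ℝ^q × {0}` it is positive, so `γ > 0` on all of `ℝ^q × {0}`. There the last row of `R_p`
is independent of the first `q − 1` rows because of its `∂/∂z` entry; at a point with `x ≠ 0`
some entry `±2xⱼ` does the same job.
-/

/-- The wrinkle model `w(n,q,s) : ℝⁿ → ℝ^q`,
`w(y,z,x) = (y, z³ + 3(|y|² − 1)z − Σ_{i≤s} x_i² + Σ_{j>s} x_j²)`,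
with `y ∈ ℝ^{q−1}` (`k = q−1`), `z ∈ ℝ`, `x ∈ ℝ^{n−q}` (`l = n−q`). -/
noncomputable def wmap (k l s : ℕ)
    (p : (EuclideanSpace ℝ (Fin k) × ℝ) × EuclideanSpace ℝ (Fin l)) :
    EuclideanSpace ℝ (Fin k) × ℝ :=
  (p.1.1, p.1.2^3 + 3*(‖p.1.1‖^2 - 1)*p.1.2 +
    ∑ i : Fin l, (if (i : ℕ) < s then (-1:ℝ) else 1) * (p.2 i)^2)

/-- The linear map `R_p : ℝⁿ → ℝ^q` obtained from the Jacobi matrix of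
`w(n,q,s)` at `p = (y,z,x)` by replacing the entry
`∂w_q/∂z = 3(z² + |y|² − 1)` with `γ(p)`: its first `q−1` rows are
`dy₁, …, dy_{q−1}` and its last row is
`(6y₁z, …, 6y_{q−1}z, γ(p), −2x₁, …, −2x_s, 2x_{s+1}, …, 2x_{n−q})`. -/
noncomputable def Rmap (k l s : ℕ)
    (γ : (EuclideanSpace ℝ (Fin k) × ℝ) × EuclideanSpace ℝ (Fin l) → ℝ)
    (p v : (EuclideanSpace ℝ (Fin k) × ℝ) × EuclideanSpace ℝ (Fin l)) :
    EuclideanSpace ℝ (Fin k) × ℝ :=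
  (v.1.1, (∑ i : Fin k, 6 * p.1.1 i * p.1.2 * v.1.1 i) + γ p * v.1.2 +
    ∑ j : Fin l, (if (j : ℕ) < s then (-2:ℝ) else 2) * p.2 j * v.2 j)

open ContinuousLinearMap Set

abbrev WrinkleDomain (k l : ℕ) := (EuclideanSpace ℝ (Fin k) × ℝ) × EuclideanSpace ℝ (Fin l)

/-- The Jacobi entry `∂w_q/∂z` of the wrinkle model. -/
noncomputable def wmapDerivZ {k l : ℕ} (p : WrinkleDomain k l) : ℝ :=
  3 * (p.1.2 ^ 2 + ‖p.1.1‖ ^ 2 - 1)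

theorem hasFDerivAt_wrinkle_cubic {E : Type*} [NormedAddCommGroup E] [InnerProductSpace ℝ E]
    (q : E × ℝ) :
    HasFDerivAt (fun q : E × ℝ => q.2 ^ 3 + 3 * (‖q.1‖ ^ 2 - 1) * q.2)
      ((6 * q.2) • (innerSL ℝ q.1 ∘L fst ℝ E ℝ) +
        (3 * (q.2 ^ 2 + ‖q.1‖ ^ 2 - 1)) • snd ℝ E ℝ) q := by
  have hcube := (hasDerivAt_pow 3 q.2).comp_hasFDerivAt q (hasFDerivAt_snd (𝕜 := ℝ) (p := q))
  have hprod := ((hasFDerivAt_fst (p := q)).norm_sq.sub_const 1).const_mul 3 |>.mul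
    (hasFDerivAt_snd (p := q))
  refine (hcube.add hprod).congr_fderiv (ContinuousLinearMap.ext fun v => ?_)
  simp only [add_apply, smul_apply, comp_apply, coe_fst', coe_snd', coe_innerSL_apply,
    smul_eq_mul, nsmul_eq_mul]
  push_cast
  ring

theorem hasFDerivAt_weighted_sum_sq {ι : Type*} [Fintype ι] (c : ι → ℝ)
    (x : EuclideanSpace ℝ ι) :
    HasFDerivAt (fun x : EuclideanSpace ℝ ι => ∑ j, c j * x j ^ 2)
      (∑ j, (2 * c j * x j) • EuclideanSpace.proj (𝕜 := ℝ) j) x := by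
  have hsq (j : ι) := ((EuclideanSpace.proj (𝕜 := ℝ) j).hasFDerivAt (x := x)).pow 2
  refine (HasFDerivAt.fun_sum fun j (_ : j ∈ Finset.univ) => (hsq j).const_mul (c j)).congr_fderiv
    ?_
  ext u
  simp only [FunLike.coe_sum, Finset.sum_apply, smul_apply, PiLp.proj_apply, smul_eq_mul]
  exact Finset.sum_congr rfl fun j _ => by ring

theorem fderiv_wmap_apply (k l s : ℕ) (p v : WrinkleDomain k l) :
    fderiv ℝ (wmap k l s) p v = Rmap k l s wmapDerivZ p v := by
  have hy : HasFDerivAt (fun p : WrinkleDomain k l => p.1.1) _ p :=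
    hasFDerivAt_fst.comp p (hasFDerivAt_fst (𝕜 := ℝ))
  have hcubic := (hasFDerivAt_wrinkle_cubic p.1).comp p (hasFDerivAt_fst (𝕜 := ℝ))
  have hquad := (hasFDerivAt_weighted_sum_sq (fun j : Fin l => if (j : ℕ) < s then -1 else 1)
    p.2).comp p (hasFDerivAt_snd (𝕜 := ℝ))
  have hw : HasFDerivAt (wmap k l s) _ p := hy.prodMk (hcubic.add hquad)
  rw [hw.fderiv]
  simp only [Rmap, wmapDerivZ, ContinuousLinearMap.prod_apply, add_apply, comp_apply,
    smul_apply, coe_fst', coe_snd', coe_innerSL_apply, FunLike.coe_sum, Finset.sum_apply,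
    smul_eq_mul, PiLp.proj_apply]
  have hinner : 6 * p.1.2 * inner ℝ p.1.1 v.1.1 = ∑ i, 6 * p.1.1 i * p.1.2 * v.1.1 i := by
    simp only [PiLp.inner_apply, RCLike.inner_apply, conj_trivial, Finset.mul_sum]
    exact Finset.sum_congr rfl fun i _ => by ring
  have hsign (j : Fin l) :
      (2 * if (j : ℕ) < s then (-1 : ℝ) else 1) = if (j : ℕ) < s then -2 else 2 := by
    split_ifs <;> norm_num
  simp only [hinner, hsign]

theorem contDiff_wmapDerivZ {k l : ℕ} {m : WithTop ℕ∞} :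
    ContDiff ℝ m (wmapDerivZ (k := k) (l := l)) :=
  contDiff_const.mul ((((contDiff_snd.comp contDiff_fst).pow 2).add
    ((contDiff_norm_sq ℝ).comp (contDiff_fst.comp contDiff_fst))).sub contDiff_const)

theorem isClosed_disk (k l : ℕ) :
    IsClosed {p : WrinkleDomain k l | ‖p.1.1‖ ^ 2 + p.1.2 ^ 2 ≤ 1 ∧ p.2 = 0} :=
  (isClosed_le (f := fun p : WrinkleDomain k l => ‖p.1.1‖ ^ 2 + p.1.2 ^ 2) (by fun_prop)
    continuous_const).inter (isClosed_eq continuous_snd continuous_const)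

theorem Rmap_surjective_of_ne_zero {k l s : ℕ} {γ : WrinkleDomain k l → ℝ}
    {p : WrinkleDomain k l} (h : γ p ≠ 0) : Function.Surjective (Rmap k l s γ p) := by
  rintro ⟨a, t⟩
  refine ⟨((a, (t - ∑ i, 6 * p.1.1 i * p.1.2 * a i) / γ p), 0), ?_⟩
  simp [Rmap, mul_div_cancel₀ _ h]

theorem Rmap_surjective_of_snd_ne_zero {k l s : ℕ} {γ : WrinkleDomain k l → ℝ}
    {p : WrinkleDomain k l} (h : p.2 ≠ 0) : Function.Surjective (Rmap k l s γ p) := by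
  obtain ⟨j, hj⟩ : ∃ j, p.2 j ≠ 0 := by
    by_contra! h'
    exact h (PiLp.ext h')
  set c : ℝ := (if (j : ℕ) < s then -2 else 2) * p.2 j
  have hc : c ≠ 0 := mul_ne_zero (by split_ifs <;> norm_num) hj
  have hrow (x : ℝ) : ∑ i : Fin l, (if (i : ℕ) < s then (-2 : ℝ) else 2) * p.2 i *
      EuclideanSpace.single j x i = c * x := by
    simp [PiLp.single_apply, c]
  rintro ⟨a, t⟩
  refine ⟨((a, 0), EuclideanSpace.single j ((t - ∑ i, 6 * p.1.1 i * p.1.2 * a i) / c)),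
    Prod.ext rfl ?_⟩
  simp only [Rmap, hrow, mul_div_cancel₀ _ hc]
  ring

open scoped ContDiff Manifold in
theorem exists_contDiff_zero_one_of_isClosed {E : Type*} [NormedAddCommGroup E] [NormedSpace ℝ E]
    [FiniteDimensional ℝ E] {s t : Set E} (hs : IsClosed s) (ht : IsClosed t) (hd : Disjoint s t) :
    ∃ f : E → ℝ, ContDiff ℝ ∞ f ∧ EqOn f 0 s ∧ EqOn f 1 t ∧ ∀ x, f x ∈ Icc 0 1 := by
  obtain ⟨f, hf0, hf1, hf01⟩ := exists_contMDiffMap_zero_one_of_isClosed (n := ⊤) 𝓘(ℝ, E) hs ht hd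
  exact ⟨f, contMDiff_iff_contDiff.1 f.contMDiff, hf0, hf1, hf01⟩

theorem wmapDerivZ_add_four_mul_pos {k l : ℕ} (p : WrinkleDomain k l) {t : ℝ}
    (ht : t ∈ Icc 0 1) (hdisk : ‖p.1.1‖ ^ 2 + p.1.2 ^ 2 ≤ 1 → t = 1) :
    0 < wmapDerivZ p + 4 * t := by
  unfold wmapDerivZ
  by_cases hp : ‖p.1.1‖ ^ 2 + p.1.2 ^ 2 ≤ 1
  · nlinarith [hdisk hp, sq_nonneg ‖p.1.1‖, sq_nonneg p.1.2]
  · linarith [ht.1]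

theorem exists_regularized_differential_general (n q s : ℕ)
    (U : Set ((EuclideanSpace ℝ (Fin (q - 1)) × ℝ) × EuclideanSpace ℝ (Fin (n - q))))
    (hU : IsOpen U)
    (hDU : {p : (EuclideanSpace ℝ (Fin (q - 1)) × ℝ) × EuclideanSpace ℝ (Fin (n - q)) |
      ‖p.1.1‖^2 + p.1.2^2 ≤ 1 ∧ p.2 = 0} ⊆ U) :
    ∃ γ : (EuclideanSpace ℝ (Fin (q - 1)) × ℝ) × EuclideanSpace ℝ (Fin (n - q)) → ℝ,
      ContDiff ℝ (⊤ : ℕ∞) γ ∧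
      (∀ p ∉ U, γ p = 3*(p.1.2^2 + ‖p.1.1‖^2 - 1)) ∧
      (∀ p ∈ U, p.2 = 0 → 0 < γ p) ∧
      (∀ p, Function.Surjective (Rmap (q - 1) (n - q) s γ p)) ∧
      (∀ p ∉ U, ∀ v, Rmap (q - 1) (n - q) s γ p v =
        fderiv ℝ (wmap (q - 1) (n - q) s) p v) := by
  obtain ⟨f, hf, hf0, hf1, hf01⟩ := exists_contDiff_zero_one_of_isClosed hU.isClosed_compl
    (isClosed_disk _ _) (disjoint_compl_left_iff_subset.2 hDU)
  set γ := fun p => wmapDerivZ p + 4 * f p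
  have hγ_out : ∀ p ∉ U, γ p = wmapDerivZ p := fun p hp => by simp [γ, hf0 hp]
  have hγ_pos : ∀ p : WrinkleDomain (q - 1) (n - q), p.2 = 0 → 0 < γ p := fun p hp =>
    wmapDerivZ_add_four_mul_pos p (hf01 p) fun hdisk => hf1 ⟨hdisk, hp⟩
  refine ⟨γ, contDiff_wmapDerivZ.add (contDiff_const.mul hf), hγ_out, fun p _ hp => hγ_pos p hp,
    fun p => ?_, fun p hp v => ?_⟩
  · by_cases hx : p.2 = 0
    · exact Rmap_surjective_of_ne_zero (hγ_pos p hx).ne'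
    · exact Rmap_surjective_of_snd_ne_zero hx
  · rw [fderiv_wmap_apply]
    simp only [Rmap, hγ_out p hp]

/-- For every open neighborhood `U` of the disk `D^q × {0}` there is a smooth
function `γ` equal to `3(z² + |y|² − 1)` outside `U`, positive on
`U ∩ (ℝ^q × {0})`, such that the regularized differential `R_p` (the Jacobi
matrix of `w` with the `∂w_q/∂z` entry replaced by `γ(p)`) is surjective at
every point; the bundle map `p ↦ R_p` coincides with `dw` outside `U`. -/
theorem exists_regularized_differential (n q s : ℕ)
    (hq : 1 ≤ q) (hqn : q ≤ n) (hs : s ≤ n - q)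
    (U : Set ((EuclideanSpace ℝ (Fin (q - 1)) × ℝ) × EuclideanSpace ℝ (Fin (n - q))))
    (hU : IsOpen U)
    (hDU : {p : (EuclideanSpace ℝ (Fin (q - 1)) × ℝ) × EuclideanSpace ℝ (Fin (n - q)) |
      ‖p.1.1‖^2 + p.1.2^2 ≤ 1 ∧ p.2 = 0} ⊆ U) :
    ∃ γ : (EuclideanSpace ℝ (Fin (q - 1)) × ℝ) × EuclideanSpace ℝ (Fin (n - q)) → ℝ,
      ContDiff ℝ (⊤ : ℕ∞) γ ∧
      (∀ p ∉ U, γ p = 3*(p.1.2^2 + ‖p.1.1‖^2 - 1)) ∧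
      (∀ p ∈ U, p.2 = 0 → 0 < γ p) ∧
      (∀ p, Function.Surjective (Rmap (q - 1) (n - q) s γ p)) ∧
      (∀ p ∉ U, ∀ v, Rmap (q - 1) (n - q) s γ p v =
        fderiv ℝ (wmap (q - 1) (n - q) s) p v) :=
  exists_regularized_differential_general n q s U hU hDU
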